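/- Let v, w : ℝ × ℝ → ℝ be C³ and λ ∈ ℝ. Define M = [[-λ + v/2, 1],[-2w-2, λ - v/2]] and N = [[2λ² + (v_x - v²)/2, -2λ - v],[4(1+w)λ + 2w_x + 2v(1+w), -2λ² - (v_x - v²)/2]]. Then the zero curvature equation M_t - N_x + M·N - N·M = 0 holds if and only if v and w satisfy the gBK equations v_t = v_xx - 2v·v_x - 4w_x and w_t = -w_xx - 2(wv)_x - 2v_x. -/

import Mathlib

open Matrix

/-- Partial derivative in the first (spatial) variable. -/
noncomputable def px (f : ℝ × ℝ → ℝ) (p : ℝ × ℝ) : ℝ :=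
  deriv (fun x => f (x, p.2)) p.1

/-- Partial derivative in the second (temporal) variable. -/
noncomputable def pt (f : ℝ × ℝ → ℝ) (p : ℝ × ℝ) : ℝ :=
  deriv (fun t => f (p.1, t)) p.2

/-- The spatial Lax matrix of the classical gBK equation. -/
noncomputable def Mgbk (v w : ℝ × ℝ → ℝ) (l : ℝ) (p : ℝ × ℝ) :
    Matrix (Fin 2) (Fin 2) ℝ :=
  !![-l + v p / 2, 1; -2 * w p - 2, l - v p / 2]

/-- The temporal Lax matrix `N^{(2)}` of the classical gBK equation. -/
noncomputable def Ngbk (v w : ℝ × ℝ → ℝ) (l : ℝ) (p : ℝ × ℝ) :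
    Matrix (Fin 2) (Fin 2) ℝ :=
  !![2 * l^2 + (px v p - (v p)^2) / 2, -2 * l - v p;
     4 * (1 + w p) * l + 2 * px w p + 2 * v p * (1 + w p),
     -(2 * l^2) - (px v p - (v p)^2) / 2]

/-! The spectral parameter cancels from every entry of `M_t - N_x + [M, N]`: the off-diagonal
entry `(0, 1)` vanishes identically, the diagonal entries are `± 1/2` times the residual of the
`v`-equation and the entry `(1, 0)` is `-2` times the residual of the `w`-equation (after the
product rule for `(w v)_x`). So zero curvature at a single `λ` is already equivalent to gBK. -/

section SliceDerivatives

variable {f : ℝ × ℝ → ℝ} {p : ℝ × ℝ}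

theorem DifferentiableAt.hasDerivAt_px (hf : DifferentiableAt ℝ f p) :
    HasDerivAt (fun x => f (x, p.2)) (px f p) p.1 :=
  (hf.comp p.1 (differentiableAt_id.prodMk (differentiableAt_const _))).hasDerivAt

theorem px_eq_fderiv (hf : Differentiable ℝ f) : px f = fun q => fderiv ℝ f q (1, 0) := by
  funext q
  exact ((hf q).hasFDerivAt.comp_hasDerivAt q.1
    ((hasDerivAt_id q.1).prodMk (hasDerivAt_const _ _))).deriv

theorem ContDiff.px {m n : WithTop ℕ∞} (hf : ContDiff ℝ m f) (hmn : n + 1 ≤ m) :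
    ContDiff ℝ n (px f) := by
  rw [px_eq_fderiv (hf.differentiable (by rintro rfl; simp at hmn))]
  exact (hf.fderiv_right hmn).clm_apply contDiff_const

end SliceDerivatives

section LaxPair

variable {v w : ℝ × ℝ → ℝ}

theorem pt_Mgbk (l : ℝ) (p : ℝ × ℝ) (i j : Fin 2) :
    pt (fun q => Mgbk v w l q i j) p = !![pt v p / 2, 0; -2 * pt w p, -(pt v p / 2)] i j := by
  fin_cases i <;> fin_cases j <;> simp [pt, Mgbk]

theorem px_Ngbk (hv : Differentiable ℝ v) (hw : Differentiable ℝ w)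
    (hvx : Differentiable ℝ (px v)) (hwx : Differentiable ℝ (px w)) (l : ℝ) (p : ℝ × ℝ)
    (i j : Fin 2) :
    px (fun q => Ngbk v w l q i j) p =
      !![(px (px v) p - 2 * v p * px v p) / 2, -px v p;
        4 * px w p * l + 2 * px (px w) p + 2 * (px v p * (1 + w p) + v p * px w p),
        -((px (px v) p - 2 * v p * px v p) / 2)] i j := by
  have hv' := (hv p).hasDerivAt_px
  have hw' := (hw p).hasDerivAt_px
  have hvx' := (hvx p).hasDerivAt_px
  have hwx' := (hwx p).hasDerivAt_px
  fin_cases i <;> fin_cases j <;>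
    simp only [Ngbk, of_apply, cons_val', cons_val_zero, cons_val_one, cons_val_fin_one,
      Fin.isValue, Fin.zero_eta, Fin.mk_one]
  · exact ((((hvx'.sub (hv'.pow 2)).div_const 2).const_add _).congr_deriv (by ring)).deriv
  · exact (hv'.const_sub _).deriv
  · exact ((((hw'.const_add 1).const_mul 4).mul_const l).add (hwx'.const_mul 2)
      |>.add ((hv'.const_mul 2).mul (hw'.const_add 1)) |>.congr_deriv (by ring)).deriv
  · exact ((((hvx'.sub (hv'.pow 2)).div_const 2).const_sub _).congr_deriv (by ring)).deriv

noncomputable def gbkResidualV (v w : ℝ × ℝ → ℝ) (p : ℝ × ℝ) : ℝ :=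
  pt v p - (px (px v) p - 2 * v p * px v p - 4 * px w p)

noncomputable def gbkResidualW (v w : ℝ × ℝ → ℝ) (p : ℝ × ℝ) : ℝ :=
  pt w p - (-(px (px w) p) - 2 * px (fun q => w q * v q) p - 2 * px v p)

theorem zeroCurvature_Mgbk_Ngbk (hv : Differentiable ℝ v) (hw : Differentiable ℝ w)
    (hvx : Differentiable ℝ (px v)) (hwx : Differentiable ℝ (px w)) (l : ℝ) (p : ℝ × ℝ)
    (i j : Fin 2) :
    pt (fun q => Mgbk v w l q i j) p - px (fun q => Ngbk v w l q i j) p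
        + (Mgbk v w l p * Ngbk v w l p - Ngbk v w l p * Mgbk v w l p) i j =
      !![gbkResidualV v w p / 2, 0; -2 * gbkResidualW v w p, -(gbkResidualV v w p / 2)] i j := by
  have hwv : px (fun q => w q * v q) p = px w p * v p + w p * px v p :=
    ((hw p).hasDerivAt_px.mul (hv p).hasDerivAt_px).deriv
  rw [pt_Mgbk, px_Ngbk hv hw hvx hwx]
  fin_cases i <;> fin_cases j <;>
    simp only [Mgbk, Ngbk, mul_fin_two, Matrix.sub_apply, of_apply, cons_val', cons_val_zero,
      cons_val_one, cons_val_fin_one, Fin.isValue, Fin.zero_eta, Fin.mk_one, gbkResidualV,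
      gbkResidualW, hwv] <;> ring

theorem entries_fin_two_eq_zero_iff {K : Type*} [Field K] [NeZero (2 : K)] (a b : K) :
    (∀ i j : Fin 2, !![a / 2, 0; -2 * b, -(a / 2)] i j = 0) ↔ a = 0 ∧ b = 0 := by
  simp +contextual [Fin.forall_fin_two, two_ne_zero]

end LaxPair

theorem gBK_zero_curvature_iff
    (v w : ℝ × ℝ → ℝ) (hv : ContDiff ℝ 3 v) (hw : ContDiff ℝ 3 w) :
    (∀ (l : ℝ) (p : ℝ × ℝ) (i j : Fin 2),
      pt (fun q => Mgbk v w l q i j) p - px (fun q => Ngbk v w l q i j) p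
        + (Mgbk v w l p * Ngbk v w l p - Ngbk v w l p * Mgbk v w l p) i j = 0)
    ↔
    (∀ p : ℝ × ℝ,
      pt v p = px (px v) p - 2 * v p * px v p - 4 * px w p ∧
      pt w p = -(px (px w) p) - 2 * px (fun q => w q * v q) p - 2 * px v p) := by
  have hv₁ : Differentiable ℝ v := hv.differentiable (by norm_num)
  have hw₁ : Differentiable ℝ w := hw.differentiable (by norm_num)
  have hvx : Differentiable ℝ (px v) :=
    (hv.px (n := 2) (by norm_num)).differentiable (by norm_num)
  have hwx : Differentiable ℝ (px w) :=
    (hw.px (n := 2) (by norm_num)).differentiable (by norm_num)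
  simp only [zeroCurvature_Mgbk_Ngbk hv₁ hw₁ hvx hwx, forall_const]
  refine forall_congr' fun p => ?_
  rw [entries_fin_two_eq_zero_iff, gbkResidualV, gbkResidualW, sub_eq_zero, sub_eq_zero]
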